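/- arXiv:1401.6882 — 5 statements merged into one kernel-verified Lean document; each statement's English description precedes it below -/
import Mathlib

section
/- Let R : ℝ^m → ℝ be C² on the open Euclidean ball U of radius δ around a minimizer θ⋆, with second partial derivatives bounded by κ₁ on U, and Hessian positive definite at θ⋆ with smallest eigenvalue λ_min. Then for δ > 0 small enough, for all θ ∈ U, √(R(θ) − R(θ⋆)) ≤ (2√(m κ₁)/λ_min)·‖∇R(θ) − ∇R(θ⋆)‖₂. -/
open Metric RealInnerProductSpace

/-!
Along the segment from `θs` to `θ`, the bound `κ₁` on the entries of the Hessian bounds its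
quadratic form by `m κ₁ ‖v‖²` (Cauchy–Schwarz on `∑ |vᵢ|`), which gives the second-order Taylor
estimate `R θ - R θs ≤ (m κ₁ / 2) ‖θ - θs‖²`, since `∇R θs = 0`. Continuity of the Hessian at
`θs` keeps its quadratic form above `(λmin / 2) ‖v‖²` on a small ball, on which `∇R` is then
strongly monotone: `(λmin / 2) ‖θ - θs‖² ≤ ⟪θ - θs, ∇R θ - ∇R θs⟫ ≤ ‖θ - θs‖ ‖∇R θ - ∇R θs‖`.
The two estimates combine to the claim.
-/

open Set Filter Topology InnerProductSpace

theorem mul_sub_le_sub_of_hasDerivAt_of_le {g g' : ℝ → ℝ} {a b c : ℝ} (hab : a ≤ b)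
    (hg : ∀ t ∈ Icc a b, HasDerivAt g (g' t) t) (hc : ∀ t ∈ Icc a b, c ≤ g' t) :
    c * (b - a) ≤ g b - g a := by
  refine (convex_Icc a b).mul_sub_le_image_sub_of_le_deriv
    (fun t ht => (hg t ht).continuousAt.continuousWithinAt)
    (fun t ht => (hg t (interior_subset ht)).differentiableAt.differentiableWithinAt)
    (fun t ht => ?_) a (left_mem_Icc.2 hab) b (right_mem_Icc.2 hab) hab
  rw [(hg t (interior_subset ht)).deriv]
  exact hc t (interior_subset ht)

theorem sub_sub_deriv_le_of_hasDerivAt_of_le {g g' g'' : ℝ → ℝ} {C : ℝ}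
    (hg : ∀ t ∈ Icc (0 : ℝ) 1, HasDerivAt g (g' t) t)
    (hg' : ∀ t ∈ Icc (0 : ℝ) 1, HasDerivAt g' (g'' t) t) (hC : ∀ t ∈ Icc (0 : ℝ) 1, g'' t ≤ C) :
    g 1 - g 0 - g' 0 ≤ C / 2 := by
  have hslope : ∀ t ∈ Icc (0 : ℝ) 1, g' t - g' 0 ≤ C * t := by
    intro t ht
    have := mul_sub_le_sub_of_hasDerivAt_of_le (g := fun s => -g' s) (c := -C) ht.1
      (fun s hs => (hg' s ⟨hs.1, hs.2.trans ht.2⟩).neg) (fun s hs => by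
        simpa using hC s ⟨hs.1, hs.2.trans ht.2⟩)
    linarith
  have := mul_sub_le_sub_of_hasDerivAt_of_le (g := fun t => C / 2 * t ^ 2 + g' 0 * t - g t)
    (c := 0) zero_le_one
    (fun t ht => (((hasDerivAt_pow 2 t).const_mul (C / 2)).add
      ((hasDerivAt_id t).const_mul (g' 0))).sub (hg t ht))
    (fun t ht => by
      have := hslope t ht
      simp only [Nat.cast_ofNat, Nat.add_one_sub_one, pow_one, mul_one, sub_nonneg]
      linarith)
  linarith

section InnerProductSpace

variable {E : Type*} [NormedAddCommGroup E] [InnerProductSpace ℝ E]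

theorem hasDerivAt_add_smul_sub (x y : E) (t : ℝ) :
    HasDerivAt (fun t : ℝ => x + t • (y - x)) (y - x) t := by
  simpa using ((hasDerivAt_id t).smul_const (y - x)).const_add x

theorem Convex.mul_norm_sub_sq_le_inner_sub {s : Set E} (hs : Convex ℝ s) {F : E → E}
    {H : E → E →L[ℝ] E} {c : ℝ} (hF : ∀ x ∈ s, HasFDerivAt F (H x) x)
    (hH : ∀ x ∈ s, ∀ v, c * ‖v‖ ^ 2 ≤ ⟪v, H x v⟫) {x y : E} (hx : x ∈ s) (hy : y ∈ s) :
    c * ‖y - x‖ ^ 2 ≤ ⟪y - x, F y - F x⟫ := by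
  have hsegment : ∀ t ∈ Icc (0 : ℝ) 1, x + t • (y - x) ∈ s :=
    fun t ht => hs.add_smul_sub_mem hx hy ht
  have := mul_sub_le_sub_of_hasDerivAt_of_le (g := fun t => ⟪y - x, F (x + t • (y - x))⟫)
    (g' := fun t => ⟪y - x, H (x + t • (y - x)) (y - x)⟫) zero_le_one
    (fun t ht => ((innerSL ℝ (y - x)).hasFDerivAt.comp_hasDerivAt t
      ((hF _ (hsegment t ht)).comp_hasDerivAt t (hasDerivAt_add_smul_sub x y t))))
    (fun t ht => hH _ (hsegment t ht) _)
  simpa [inner_sub_right] using this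

theorem Convex.sub_sub_inner_le [CompleteSpace E] {s : Set E} (hs : Convex ℝ s) {f : E → ℝ}
    {F : E → E} {H : E → E →L[ℝ] E} {C : ℝ} (hf : ∀ x ∈ s, HasGradientAt f (F x) x)
    (hF : ∀ x ∈ s, HasFDerivAt F (H x) x)
    (hH : ∀ x ∈ s, ∀ v, ⟪v, H x v⟫ ≤ C * ‖v‖ ^ 2) {x y : E} (hx : x ∈ s) (hy : y ∈ s) :
    f y - f x - ⟪F x, y - x⟫ ≤ C / 2 * ‖y - x‖ ^ 2 := by
  have hsegment : ∀ t ∈ Icc (0 : ℝ) 1, x + t • (y - x) ∈ s :=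
    fun t ht => hs.add_smul_sub_mem hx hy ht
  have := sub_sub_deriv_le_of_hasDerivAt_of_le (g := fun t => f (x + t • (y - x)))
    (g' := fun t => ⟪y - x, F (x + t • (y - x))⟫)
    (g'' := fun t => ⟪y - x, H (x + t • (y - x)) (y - x)⟫)
    (fun t ht => by
      refine ((hasGradientAt_iff_hasFDerivAt.1 (hf _ (hsegment t ht))).comp_hasDerivAt t
        (hasDerivAt_add_smul_sub x y t)).congr_deriv ?_
      simp [real_inner_comm])
    (fun t ht => ((innerSL ℝ (y - x)).hasFDerivAt.comp_hasDerivAt t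
      ((hF _ (hsegment t ht)).comp_hasDerivAt t (hasDerivAt_add_smul_sub x y t))))
    (fun t ht => hH _ (hsegment t ht) _)
  simp only [zero_smul, add_zero, one_smul, add_sub_cancel, real_inner_comm (F x)] at this
  linarith

theorem eventually_mul_norm_sq_le_inner_apply {X : Type*} [TopologicalSpace X]
    {A : X → E →L[ℝ] E} {x₀ : X} (hA : ContinuousAt A x₀) {c c' : ℝ} (hc : c' < c)
    (h : ∀ v, c * ‖v‖ ^ 2 ≤ ⟪v, A x₀ v⟫) : ∀ᶠ x in 𝓝 x₀, ∀ v, c' * ‖v‖ ^ 2 ≤ ⟪v, A x v⟫ := by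
  filter_upwards [hA.eventually (ball_mem_nhds (A x₀) (sub_pos.2 hc))] with x hx v
  rw [dist_eq_norm] at hx
  have hpert : |⟪v, (A x - A x₀) v⟫| ≤ (c - c') * ‖v‖ ^ 2 :=
    calc |⟪v, (A x - A x₀) v⟫| ≤ ‖v‖ * (‖A x - A x₀‖ * ‖v‖) :=
          (abs_real_inner_le_norm _ _).trans (by gcongr; exact (A x - A x₀).le_opNorm v)
      _ ≤ (c - c') * ‖v‖ ^ 2 := by nlinarith [norm_nonneg v]
  have := (abs_le.1 hpert).1
  simp only [sub_apply, inner_sub_right] at this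
  linarith [h v]

theorem norm_le_of_mul_norm_sq_le_inner {u w : E} {c : ℝ} (hc : 0 < c)
    (h : c * ‖u‖ ^ 2 ≤ ⟪u, w⟫) : ‖u‖ ≤ ‖w‖ / c := by
  rw [le_div_iff₀' hc]
  rcases (norm_nonneg u).eq_or_lt with hu | hu
  · rw [← hu, mul_zero]; exact norm_nonneg w
  · nlinarith [real_inner_le_norm u w]

theorem inner_fderiv_gradient_apply [CompleteSpace E] (f : E → ℝ) (x v w : E) :
    ⟪fderiv ℝ (gradient f) x v, w⟫ = iteratedFDeriv ℝ 2 f x ![v, w] := by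
  have hgradient : gradient f = (toDual ℝ E).symm ∘ fderiv ℝ f := rfl
  rw [iteratedFDeriv_two_apply, hgradient, LinearIsometryEquiv.comp_fderiv]
  simp only [ContinuousLinearMap.coe_comp, Function.comp_apply,
    Matrix.cons_val_zero, Matrix.cons_val_one]
  exact toDual_symm_apply

theorem ContDiffAt.gradient [CompleteSpace E] {f : E → ℝ} {x : E} {n : WithTop ℕ∞}
    (hf : ContDiffAt ℝ (n + 1) f x) : ContDiffAt ℝ n (gradient f) x :=
  (toDual ℝ E).symm.contDiff.comp_contDiffAt x (hf.fderiv_right le_rfl)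

theorem IsLocalMin.gradient_eq_zero [CompleteSpace E] {f : E → ℝ} {x : E}
    (h : IsLocalMin f x) : gradient f x = 0 := by
  simp [gradient, h.fderiv_eq_zero]

end InnerProductSpace

theorem EuclideanSpace.inner_apply_le_card_mul_norm_sq {ι : Type*} [Fintype ι] [DecidableEq ι]
    (A : EuclideanSpace ℝ ι →ₗ[ℝ] EuclideanSpace ℝ ι) {κ : ℝ} (hκ : 0 ≤ κ)
    (hA : ∀ i j, |⟪A (single i 1), single j 1⟫| ≤ κ) (v : EuclideanSpace ℝ ι) :
    ⟪v, A v⟫ ≤ Fintype.card ι * κ * ‖v‖ ^ 2 := by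
  have hexpand : ⟪v, A v⟫ = ∑ i, ∑ j, v i * v j * ⟪A (single i 1), single j 1⟫ := by
    conv_lhs => rw [← (EuclideanSpace.basisFun ι ℝ).sum_repr v]
    simp [map_sum, inner_sum, sum_inner, inner_smul_left, inner_smul_right, Finset.mul_sum]
    refine Finset.sum_congr rfl fun i _ => Finset.sum_congr rfl fun j _ => ?_
    rw [real_inner_comm]
    ring
  calc ⟪v, A v⟫ ≤ ∑ i, ∑ j, |v i| * |v j| * κ := by
        rw [hexpand]
        refine Finset.sum_le_sum fun i _ => Finset.sum_le_sum fun j _ => ?_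
        calc v i * v j * ⟪A (single i 1), single j 1⟫
            ≤ |v i * v j * ⟪A (single i 1), single j 1⟫| := le_abs_self _
          _ = |v i| * |v j| * |⟪A (single i 1), single j 1⟫| := by rw [abs_mul, abs_mul]
          _ ≤ |v i| * |v j| * κ := by gcongr; exact hA i j
    _ = κ * (∑ i, |v i|) ^ 2 := by
        simp_rw [sq, Finset.sum_mul_sum, Finset.mul_sum, mul_comm κ]
    _ ≤ κ * (Fintype.card ι * ∑ i, |v i| ^ 2) := by
        gcongr
        exact sq_sum_le_card_mul_sum_sq
    _ = Fintype.card ι * κ * ‖v‖ ^ 2 := by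
        rw [EuclideanSpace.norm_sq_eq]
        simp [mul_comm, mul_assoc]

theorem stmt_2_general (m : ℕ)
    (R : EuclideanSpace ℝ (Fin m) → ℝ) (θs : EuclideanSpace ℝ (Fin m))
    (δ κ₁ lammin : ℝ) (hδ : 0 < δ) (hκ : 0 < κ₁) (hlam : 0 < lammin)
    (hmin : ∀ θ, R θs ≤ R θ)
    (hC2 : ContDiffOn ℝ 2 R (ball θs δ))
    (hbound : ∀ θ ∈ ball θs δ, ∀ i j : Fin m,
      |iteratedFDeriv ℝ 2 R θ
        ![EuclideanSpace.single i (1:ℝ), EuclideanSpace.single j (1:ℝ)]| ≤ κ₁)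
    (hHess : ∀ v : EuclideanSpace ℝ (Fin m),
      lammin * ‖v‖ ^ 2 ≤ ⟪v, fderiv ℝ (gradient R) θs v⟫) :
    ∃ δ' : ℝ, 0 < δ' ∧ δ' ≤ δ ∧ ∀ θ ∈ ball θs δ',
      Real.sqrt (R θ - R θs) ≤
        (2 * Real.sqrt ((m : ℝ) * κ₁) / lammin) *
          ‖gradient R θ - gradient R θs‖ := by
  have hC2at : ∀ x ∈ ball θs δ, ContDiffAt ℝ 2 R x :=
    fun x hx => hC2.contDiffAt (isOpen_ball.mem_nhds hx)
  have hR : ∀ x ∈ ball θs δ, HasGradientAt R (gradient R x) x :=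
    fun x hx => ((hC2at x hx).differentiableAt two_ne_zero).hasGradientAt
  have hgradient : ∀ x ∈ ball θs δ, HasFDerivAt (gradient R) (fderiv ℝ (gradient R) x) x :=
    fun x hx => ((hC2at x hx).gradient (n := 1)).differentiableAt one_ne_zero |>.hasFDerivAt
  have hupper : ∀ x ∈ ball θs δ, ∀ v, ⟪v, fderiv ℝ (gradient R) x v⟫ ≤ m * κ₁ * ‖v‖ ^ 2 := by
    intro x hx v
    simpa using EuclideanSpace.inner_apply_le_card_mul_norm_sq
      (fderiv ℝ (gradient R) x).toLinearMap hκ.le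
      (fun i j => by simpa [inner_fderiv_gradient_apply] using hbound x hx i j) v
  have hcont : ContinuousAt (fderiv ℝ (gradient R)) θs :=
    ((hC2at θs (mem_ball_self hδ)).gradient (n := 1)).continuousAt_fderiv one_ne_zero
  obtain ⟨δ₁, hδ₁, hlower⟩ := Metric.eventually_nhds_iff_ball.1
    (eventually_mul_norm_sq_le_inner_apply hcont (half_lt_self hlam) hHess)
  refine ⟨min δ δ₁, lt_min hδ hδ₁, min_le_left _ _, fun θ hθ => ?_⟩
  have hθδ : θ ∈ ball θs δ := ball_subset_ball (min_le_left _ _) hθ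
  have hgrad0 : gradient R θs = 0 := IsLocalMin.gradient_eq_zero (.of_forall hmin)
  have htaylor : R θ - R θs ≤ m * κ₁ / 2 * ‖θ - θs‖ ^ 2 := by
    simpa [hgrad0] using
      (convex_ball θs δ).sub_sub_inner_le hR hgradient hupper (mem_ball_self hδ) hθδ
  have hmono := (convex_ball θs (min δ δ₁)).mul_norm_sub_sq_le_inner_sub
    (fun x hx => hgradient x (ball_subset_ball (min_le_left _ _) hx))
    (fun x hx => hlower x (ball_subset_ball (min_le_right _ _) hx))
    (mem_ball_self (lt_min hδ hδ₁)) hθ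
  have hnorm := norm_le_of_mul_norm_sq_le_inner (half_pos hlam) hmono
  calc √(R θ - R θs) ≤ √(m * κ₁ * ‖θ - θs‖ ^ 2) := by
        gcongr
        nlinarith [show 0 ≤ m * κ₁ * ‖θ - θs‖ ^ 2 by positivity]
    _ = √(m * κ₁) * ‖θ - θs‖ := by
        rw [Real.sqrt_mul (by positivity), Real.sqrt_sq (norm_nonneg _)]
    _ ≤ √(m * κ₁) * (‖gradient R θ - gradient R θs‖ / (lammin / 2)) := by gcongr
    _ = 2 * √(m * κ₁) / lammin * ‖gradient R θ - gradient R θs‖ := by ring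

/-- Lemma 1 of the paper: the gradient excess risk controls the square root of the
excess risk. If `R` is C² on the ball of radius `δ` around a minimizer `θs` with second
partial derivatives bounded by `κ₁` and positive definite Hessian at `θs` with smallest
eigenvalue (at least) `λmin`, then for a small enough radius `δ' ≤ δ`,
`√(R θ - R θs) ≤ (2√(m κ₁)/λmin) ‖∇R θ - ∇R θs‖` on the ball of radius `δ'`. -/
theorem stmt_2 (m : ℕ) (hm : 1 ≤ m)
    (R : EuclideanSpace ℝ (Fin m) → ℝ) (θs : EuclideanSpace ℝ (Fin m))
    (δ κ₁ lammin : ℝ) (hδ : 0 < δ) (hκ : 0 < κ₁) (hlam : 0 < lammin)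
    (hmin : ∀ θ, R θs ≤ R θ)
    (hC2 : ContDiffOn ℝ 2 R (ball θs δ))
    (hbound : ∀ θ ∈ ball θs δ, ∀ i j : Fin m,
      |iteratedFDeriv ℝ 2 R θ
        ![EuclideanSpace.single i (1:ℝ), EuclideanSpace.single j (1:ℝ)]| ≤ κ₁)
    (hHess : ∀ v : EuclideanSpace ℝ (Fin m),
      lammin * ‖v‖ ^ 2 ≤ ⟪v, fderiv ℝ (gradient R) θs v⟫) :
    ∃ δ' : ℝ, 0 < δ' ∧ δ' ≤ δ ∧ ∀ θ ∈ ball θs δ',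
      Real.sqrt (R θ - R θs) ≤
        (2 * Real.sqrt ((m : ℝ) * κ₁) / lammin) *
          ‖gradient R θ - gradient R θs‖ :=
  stmt_2_general m R θs δ κ₁ lammin hδ hκ hlam hmin hC2 hbound hHess
end

section
/- (Lemma 4, robust regression) Let ρ_γ be the Huber loss, ξ a real random variable with symmetric density, and define the local risk derivative G(t) = −E ρ_γ'(ξ + f⋆ − t) for t ∈ ℝ, where f⋆ ∈ ℝ is fixed (so G(f⋆) = 0). Let κ := E ρ_γ''(ξ) > 0 and assume the map u ↦ E ρ_γ''(ξ + u) is 2-Lipschitz. Then for any t with |t − f⋆| ≤ κ/4, one has |t − f⋆| ≤ (2/κ)·|G(t) − G(f⋆)|. -/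
open MeasureTheory

/-- The derivative of the Huber loss of scale `γ`. -/
noncomputable def huberDeriv (γ z : ℝ) : ℝ :=
  if |z| ≤ γ then z else γ * Real.sign z

/-- The (a.e.) second derivative of the Huber loss of scale `γ`. -/
noncomputable def huberDeriv2 (γ z : ℝ) : ℝ :=
  if |z| < γ then 1 else 0

/-!
Off its two kinks `±γ` the Huber derivative `ρ'_γ` has derivative `ρ''_γ`, so
`ρ'_γ b - ρ'_γ a = ∫ s in a..b, ρ''_γ s`. Taking expectations and swapping the integrals,
`G t - G f⋆ = -∫ u in 0..f⋆ - t, K u` with `K u = E ρ''_γ (ξ + u)`. As `K 0 = κ` and `K` is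
2-Lipschitz, `K ≥ κ/2` on `[-κ/4, κ/4]`, which bounds that integral below by `(κ/2) |t - f⋆|`.
-/

open Set Filter Topology

section Huber

variable {γ : ℝ}

lemma huberDeriv_eq_max_min (hγ : 0 ≤ γ) (z : ℝ) : huberDeriv γ z = max (-γ) (min z γ) := by
  unfold huberDeriv
  split_ifs with h
  · rw [abs_le] at h
    rw [min_eq_left h.2, max_eq_right h.1]
  · rcases lt_or_gt_of_ne (show z ≠ 0 by rintro rfl; simp [hγ] at h) with hz | hz
    · rw [abs_of_neg hz] at h
      rw [Real.sign_of_neg hz, min_eq_left (by linarith), max_eq_left (by linarith)]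
      ring
    · rw [abs_of_pos hz] at h
      rw [Real.sign_of_pos hz, min_eq_right (by linarith), max_eq_right (by linarith)]
      ring

lemma continuous_huberDeriv (hγ : 0 ≤ γ) : Continuous (huberDeriv γ) := by
  simp_rw [funext (huberDeriv_eq_max_min hγ)]
  fun_prop

lemma abs_huberDeriv_le (hγ : 0 ≤ γ) (z : ℝ) : |huberDeriv γ z| ≤ γ := by
  rw [huberDeriv_eq_max_min hγ, abs_le]
  exact ⟨le_max_left _ _, max_le (by linarith) (min_le_right _ _)⟩

lemma measurable_huberDeriv2 (γ : ℝ) : Measurable (huberDeriv2 γ) :=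
  Measurable.ite (measurableSet_lt continuous_abs.measurable measurable_const)
    measurable_const measurable_const

lemma abs_huberDeriv2_le (γ z : ℝ) : |huberDeriv2 γ z| ≤ 1 := by
  unfold huberDeriv2; split_ifs <;> simp

lemma hasDerivAt_huberDeriv (hγ : 0 ≤ γ) {x : ℝ} (hx : |x| ≠ γ) :
    HasDerivAt (huberDeriv γ) (huberDeriv2 γ x) x := by
  rcases hx.lt_or_gt with hin | hout
  · have hloc : huberDeriv γ =ᶠ[𝓝 x] id := by
      filter_upwards [(isOpen_lt continuous_abs continuous_const).mem_nhds hin] with y hy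
      exact if_pos (le_of_lt hy)
    simpa [huberDeriv2, hin] using (hasDerivAt_id x).congr_of_eventuallyEq hloc
  · have hx2 : huberDeriv2 γ x = 0 := if_neg hout.not_gt
    rw [hx2]
    rcases lt_abs.mp hout with hpos | hneg
    · have hloc : huberDeriv γ =ᶠ[𝓝 x] fun _ => γ := by
        filter_upwards [lt_mem_nhds hpos] with y hy
        rw [huberDeriv_eq_max_min hγ, min_eq_right hy.le, max_eq_right (by linarith)]
      exact (hasDerivAt_const x γ).congr_of_eventuallyEq hloc
    · have hloc : huberDeriv γ =ᶠ[𝓝 x] fun _ => -γ := by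
        filter_upwards [gt_mem_nhds (show x < -γ by linarith)] with y hy
        rw [huberDeriv_eq_max_min hγ, min_eq_left (by linarith), max_eq_left hy.le]
      exact (hasDerivAt_const x (-γ)).congr_of_eventuallyEq hloc

lemma intervalIntegrable_huberDeriv2 (γ a b : ℝ) :
    IntervalIntegrable (huberDeriv2 γ) volume a b :=
  (intervalIntegrable_const (c := (1 : ℝ))).mono_fun
    (measurable_huberDeriv2 γ).aestronglyMeasurable
    (ae_of_all _ fun z => by simpa using abs_huberDeriv2_le γ z)

lemma integral_huberDeriv2 (hγ : 0 ≤ γ) (a b : ℝ) :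
    ∫ s in a..b, huberDeriv2 γ s = huberDeriv γ b - huberDeriv γ a := by
  refine integral_eq_of_hasDerivAt_off_countable _ _ ((countable_singleton γ).insert (-γ))
    (continuous_huberDeriv hγ).continuousOn (fun x hx => hasDerivAt_huberDeriv hγ ?_)
    (intervalIntegrable_huberDeriv2 γ a b)
  rintro hxγ
  rcases (abs_eq hγ).mp hxγ with h | h <;> simp [h] at hx

end Huber

lemma intervalIntegral_integral_huberDeriv2 {Ω : Type*} [MeasurableSpace Ω] {P : Measure Ω}
    [IsFiniteMeasure P] {X : Ω → ℝ} (hX : Measurable X) {γ : ℝ} (hγ : 0 ≤ γ) (a b : ℝ) :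
    ∫ u in a..b, ∫ ω, huberDeriv2 γ (X ω + u) ∂P
      = ∫ ω, huberDeriv γ (X ω + b) ∂P - ∫ ω, huberDeriv γ (X ω + a) ∂P := by
  have hint : ∀ c, Integrable (fun ω => huberDeriv γ (X ω + c)) P := fun c =>
    .of_bound ((continuous_huberDeriv hγ).measurable.comp (hX.add_const c)).aestronglyMeasurable
      γ (ae_of_all _ fun ω => abs_huberDeriv_le hγ _)
  have : IsFiniteMeasure (volume.restrict (uIoc a b)) :=
    isFiniteMeasure_restrict.mpr measure_Ioc_lt_top.ne
  have hprod : Integrable (Function.uncurry fun u ω => huberDeriv2 γ (X ω + u))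
      ((volume.restrict (uIoc a b)).prod P) :=
    .of_bound ((measurable_huberDeriv2 γ).comp
        ((hX.comp measurable_snd).add measurable_fst)).aestronglyMeasurable
      1 (ae_of_all _ fun p => abs_huberDeriv2_le γ _)
  rw [← integral_sub (hint b) (hint a), intervalIntegral_integral_swap hprod]
  congr 1 with ω
  rw [intervalIntegral.integral_comp_add_left (huberDeriv2 γ), integral_huberDeriv2 hγ]

lemma mul_abs_le_abs_intervalIntegral {k : ℝ → ℝ} {a b m : ℝ}
    (hk : IntervalIntegrable k volume a b) (hm : ∀ u ∈ uIcc a b, m ≤ k u) :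
    m * |b - a| ≤ |∫ u in a..b, k u| := by
  rcases le_total a b with hab | hba
  · calc m * |b - a| = ∫ _ in a..b, m := by simp [abs_of_nonneg (sub_nonneg.mpr hab), mul_comm]
      _ ≤ ∫ u in a..b, k u :=
          intervalIntegral.integral_mono_on hab intervalIntegrable_const hk
            fun u hu => hm u (Icc_subset_uIcc hu)
      _ ≤ _ := le_abs_self _
  · calc m * |b - a| = ∫ _ in b..a, m := by
          simp [abs_of_nonpos (sub_nonpos.mpr hba), mul_comm]
      _ ≤ ∫ u in b..a, k u :=
          intervalIntegral.integral_mono_on hba intervalIntegrable_const hk.symm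
            fun u hu => hm u (Icc_subset_uIcc' hu)
      _ ≤ _ := by rw [intervalIntegral.integral_symm]; exact neg_le_abs _

theorem stmt_11_general {Ω : Type*} [MeasurableSpace Ω] (P : Measure Ω) [IsProbabilityMeasure P]
    (ξ : Ω → ℝ) (hξ : Measurable ξ)
    (γ : ℝ) (hγ : 0 < γ) (fstar : ℝ)
    (G : ℝ → ℝ) (hG : ∀ t, G t = -∫ ω, huberDeriv γ (ξ ω + fstar - t) ∂P)
    (κ : ℝ) (hκdef : κ = ∫ ω, huberDeriv2 γ (ξ ω) ∂P) (hκpos : 0 < κ)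
    (hLip : LipschitzWith 2 (fun u : ℝ => ∫ ω, huberDeriv2 γ (ξ ω + u) ∂P)) :
    ∀ t : ℝ, |t - fstar| ≤ κ / 4 → |t - fstar| ≤ (2 / κ) * |G t - G fstar| := by
  intro t ht
  set K : ℝ → ℝ := fun u => ∫ ω, huberDeriv2 γ (ξ ω + u) ∂P
  have hK0 : K 0 = κ := by simp [K, hκdef]
  have hGdiff : G t - G fstar = -∫ u in 0..fstar - t, K u := by
    simp only [hG, add_sub_assoc, sub_self, intervalIntegral_integral_huberDeriv2 hξ hγ.le, K]
    ring
  have hKlb : ∀ u ∈ uIcc 0 (fstar - t), κ / 2 ≤ K u := by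
    intro u hu
    have hu' : |u| ≤ κ / 4 := by
      have hsub := abs_sub_left_of_mem_uIcc hu
      rw [sub_zero, sub_zero, abs_sub_comm] at hsub
      exact hsub.trans ht
    have hdist := hLip.dist_le_mul u 0
    rw [Real.dist_eq, Real.dist_eq, hK0, sub_zero, NNReal.coe_ofNat] at hdist
    linarith [neg_abs_le (K u - κ)]
  have key := mul_abs_le_abs_intervalIntegral
    (hLip.continuous.intervalIntegrable 0 (fstar - t)) hKlb
  rw [sub_zero, abs_sub_comm] at key
  rw [hGdiff, abs_neg, div_mul_eq_mul_div, le_div_iff₀ hκpos]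
  linarith

/-- Lemma 4 of the paper (robust regression). With
`G t = -E ρ_γ'(ξ + f⋆ - t)`, `κ = E ρ_γ''(ξ) > 0`, and `u ↦ E ρ_γ''(ξ + u)`
2-Lipschitz, any `t` with `|t - f⋆| ≤ κ/4` satisfies
`|t - f⋆| ≤ (2/κ) |G t - G f⋆|`. -/
theorem stmt_11 {Ω : Type*} [MeasurableSpace Ω] (P : Measure Ω) [IsProbabilityMeasure P]
    (ξ : Ω → ℝ) (hξ : Measurable ξ) (g : ℝ → ℝ) (hg : Measurable g) (hg0 : ∀ x, 0 ≤ g x)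
    (hdens : Measure.map ξ P = MeasureTheory.volume.withDensity fun x => ENNReal.ofReal (g x))
    (hsym : ∀ x, g (-x) = g x)
    (γ : ℝ) (hγ : 0 < γ) (fstar : ℝ)
    (G : ℝ → ℝ) (hG : ∀ t, G t = -∫ ω, huberDeriv γ (ξ ω + fstar - t) ∂P)
    (κ : ℝ) (hκdef : κ = ∫ ω, huberDeriv2 γ (ξ ω) ∂P) (hκpos : 0 < κ)
    (hLip : LipschitzWith 2 (fun u : ℝ => ∫ ω, huberDeriv2 γ (ξ ω + u) ∂P)) :
    ∀ t : ℝ, |t - fstar| ≤ κ / 4 → |t - fstar| ≤ (2 / κ) * |G t - G fstar| :=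
  stmt_11_general P ξ hξ γ hγ fstar G hG κ hκdef hκpos hLip
end

section
/- (Bias-variance trade-off rate) For s ∈ (0,1]^d, L > 0 and constants c₁, c₂ > 0, the infimum over h ∈ (0,1]^d of c₁∑_{j=1}^d h_j^{s_j} + c₂ (n ∏_{j=1}^d h_j)^{−1/2} is attained, up to constants depending only on (d, s, c₁, c₂), at h_j ≍ n^{−\bar s/(s_j(2\bar s + 1))}, and its value is of order n^{−\bar s/(2\bar s+1)}, where \bar s = (∑_j 1/s_j)^{−1} is the harmonic mean of the s_j. In particular there exists C = C(d,s,c₁,c₂) with inf_h {c₁∑_j h_j^{s_j} + c₂(n∏_j h_j)^{−1/2}} ≤ C·n^{−\bar s/(2\bar s + 1)} for all n ≥ 1. -/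
/-!
Take `h_j = n ^ (-r / s_j)` with `r = s̄ / (2 s̄ + 1)`. Then every bias term `h_j ^ s_j` equals
`n ^ (-r)`, and `∏ h_j = n ^ (-r / s̄)`, so `n ∏ h_j = n ^ (1 - r / s̄) = n ^ (2 r)` and the
variance term `(n ∏ h_j) ^ (-1/2)` is `n ^ (-r)` as well, and the objective equals
`(c₁ d + c₂) n ^ (-r)`.
-/

open Finset Real

lemma rpow_neg_div_rpow_self {x s : ℝ} (hx : 0 < x) (hs : s ≠ 0) (r : ℝ) :
    (x ^ (-(r / s))) ^ s = x ^ (-r) := by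
  rw [← rpow_mul hx.le]
  congr 1
  field_simp

lemma prod_rpow_neg_div {ι : Type*} [Fintype ι] {x : ℝ} (hx : 0 < x) (s : ι → ℝ) (r : ℝ) :
    ∏ j, x ^ (-(r / s j)) = x ^ (-(r * ∑ j, 1 / s j)) := by
  rw [← rpow_sum_of_pos hx, mul_sum, ← sum_neg_distrib]
  simp only [mul_one_div]

lemma harmonic_rate_balance {S : ℝ} (hS : 0 < S) :
    1 + -(S⁻¹ / (2 * S⁻¹ + 1) * S) = 2 * (S⁻¹ / (2 * S⁻¹ + 1)) := by
  field_simp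
  ring

lemma rpow_mul_rpow_neg_harmonic_rate {x S : ℝ} (hx : 0 < x) (hS : 0 < S) :
    (x * x ^ (-(S⁻¹ / (2 * S⁻¹ + 1) * S))) ^ (-(1 : ℝ) / 2) = x ^ (-(S⁻¹ / (2 * S⁻¹ + 1))) := by
  nth_rw 1 [← rpow_one x]
  rw [← rpow_add hx, harmonic_rate_balance hS, ← rpow_mul hx.le]
  congr 1
  ring

theorem bias_variance_balance {ι : Type*} [Fintype ι] {s : ι → ℝ} (hs : ∀ j, 0 < s j)
    (hS : 0 < ∑ j, 1 / s j) {x : ℝ} (hx : 0 < x) (c₁ c₂ : ℝ) :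
    let r := (∑ j, 1 / s j)⁻¹ / (2 * (∑ j, 1 / s j)⁻¹ + 1)
    c₁ * ∑ j, (x ^ (-(r / s j))) ^ s j + c₂ * (x * ∏ j, x ^ (-(r / s j))) ^ (-(1 : ℝ) / 2) =
      (c₁ * Fintype.card ι + c₂) * x ^ (-r) := by
  intro r
  rw [prod_rpow_neg_div hx, rpow_mul_rpow_neg_harmonic_rate hx hS]
  simp only [rpow_neg_div_rpow_self hx (hs _).ne', sum_const, card_univ, nsmul_eq_mul]
  ring

/-- Anisotropic bias–variance trade-off: for `s ∈ (0,1]^d` there is a constant `C`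
such that for all `n ≥ 1`,
`inf_{h ∈ (0,1]^d} {c₁ ∑_j h_j^{s_j} + c₂ (n ∏_j h_j)^{-1/2}} ≤ C n^{-s̄/(2s̄+1)}`,
where `s̄ = (∑_j 1/s_j)⁻¹` is the harmonic mean. The infimum bound is expressed by
exhibiting a bandwidth `h` achieving it. -/
theorem stmt_16 (d : ℕ) (hd : 1 ≤ d)
    (s : Fin d → ℝ) (hs : ∀ j, 0 < s j ∧ s j ≤ 1)
    (c₁ c₂ : ℝ) (hc₁ : 0 < c₁) (hc₂ : 0 < c₂) :
    ∃ C : ℝ, 0 < C ∧ ∀ n : ℕ, 1 ≤ n →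
      ∃ h : Fin d → ℝ, (∀ j, 0 < h j ∧ h j ≤ 1) ∧
        c₁ * ∑ j, h j ^ (s j) + c₂ * ((n : ℝ) * ∏ j, h j) ^ (-(1:ℝ)/2) ≤
          C * (n : ℝ) ^ (-((∑ j, 1 / s j)⁻¹ / (2 * (∑ j, 1 / s j)⁻¹ + 1))) := by
  have hs_pos (j : Fin d) : 0 < s j := (hs j).1
  have hS : 0 < ∑ j, 1 / s j :=
    sum_pos (fun j _ => one_div_pos.mpr (hs_pos j)) ⟨⟨0, hd⟩, mem_univ _⟩
  set r := (∑ j, 1 / s j)⁻¹ / (2 * (∑ j, 1 / s j)⁻¹ + 1)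
  have hr : 0 ≤ r := by positivity
  refine ⟨c₁ * d + c₂, by positivity, fun n hn => ?_⟩
  have hn₁ : (1 : ℝ) ≤ n := by exact_mod_cast hn
  have hn₀ : (0 : ℝ) < n := one_pos.trans_le hn₁
  refine ⟨fun j => (n : ℝ) ^ (-(r / s j)), fun j => ⟨rpow_pos_of_pos hn₀ _, ?_⟩, ?_⟩
  · exact rpow_le_one_of_one_le_of_nonpos hn₁
      (neg_nonpos.mpr (div_nonneg hr (hs_pos j).le))
  · have := bias_variance_balance hs_pos hS hn₀ c₁ c₂
    rw [Fintype.card_fin] at this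
    exact this.le
end

section
/- (Deconvolution bias–variance rate) For s ∈ (0,∞)^d, β ∈ (0,∞)^d and constants c₁, c₂ > 0, there exists C > 0 such that for all n ≥ 1, inf over h ∈ (0,1]^d of (c₁∑_{j=1}^d h_j^{s_j} + c₂ n^{−1/2} ∏_{j=1}^d h_j^{−β_j})² ≤ C·n^{−1/(1 + ∑_{j=1}^d β_j/s_j)}. -/
open Real Finset

/-!
Take `h_j = n^{-a/s_j}` with `a = 1/(2(1 + ∑_j β_j/s_j))`. Then every bias term `h_j^{s_j}` equals
`n^{-a}`, and the variance term `n^{-1/2} ∏_j h_j^{-β_j} = n^{-1/2 + a ∑_j β_j/s_j}` equals `n^{-a}`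
as well, so the squared sum is a constant times `n^{-2a} = n^{-1/(1 + ∑_j β_j/s_j)}`.
-/

namespace Deconvolution

variable {ι : Type*} {x : ℝ} {j : ι}

noncomputable def bandwidth (x a : ℝ) (s : ι → ℝ) (j : ι) : ℝ := x ^ (-(a / s j))

lemma bandwidth_pos (hx : 0 < x) (a : ℝ) (s : ι → ℝ) (j : ι) : 0 < bandwidth x a s j :=
  rpow_pos_of_pos hx _

lemma bandwidth_le_one (hx : 1 ≤ x) {a : ℝ} {s : ι → ℝ} (hs : 0 < s j) (ha : 0 ≤ a) :
    bandwidth x a s j ≤ 1 :=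
  rpow_le_one_of_one_le_of_nonpos hx (neg_nonpos.mpr (div_nonneg ha hs.le))

lemma bandwidth_rpow (hx : 0 ≤ x) (a : ℝ) {s : ι → ℝ} (hs : s j ≠ 0) :
    bandwidth x a s j ^ s j = x ^ (-a) := by
  rw [bandwidth, ← rpow_mul hx]
  congr 1
  field_simp

lemma bandwidth_rpow_neg (hx : 0 ≤ x) (a b : ℝ) {s : ι → ℝ} (hs : s j ≠ 0) :
    bandwidth x a s j ^ (-b) = x ^ (a * (b / s j)) := by
  rw [bandwidth, ← rpow_mul hx]
  congr 1
  field_simp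

lemma sum_bandwidth_rpow [Fintype ι] (hx : 0 ≤ x) (a : ℝ) {s : ι → ℝ} (hs : ∀ j, s j ≠ 0) :
    ∑ j, bandwidth x a s j ^ s j = Fintype.card ι * x ^ (-a) := by
  simp only [bandwidth_rpow hx a (hs _), sum_const, card_univ, nsmul_eq_mul]

lemma prod_bandwidth_rpow_neg [Fintype ι] (hx : 0 < x) (a : ℝ) {s : ι → ℝ} (hs : ∀ j, s j ≠ 0)
    (β : ι → ℝ) :
    ∏ j, bandwidth x a s j ^ (-β j) = x ^ (a * ∑ j, β j / s j) := by
  simp only [bandwidth_rpow_neg hx.le a _ (hs _)]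
  rw [← rpow_sum_of_pos hx, mul_sum]

theorem bias_add_variance_sq_at_bandwidth [Fintype ι] (hx : 0 < x) {s β : ι → ℝ}
    (hs : ∀ j, s j ≠ 0) {a : ℝ} (ha : 2 * a * (1 + ∑ j, β j / s j) = 1) (c₁ c₂ : ℝ) :
    (c₁ * ∑ j, bandwidth x a s j ^ s j +
        c₂ * x ^ (-(1 : ℝ) / 2) * ∏ j, bandwidth x a s j ^ (-β j)) ^ 2 =
      (c₁ * Fintype.card ι + c₂) ^ 2 * x ^ (-(1 / (1 + ∑ j, β j / s j))) := by
  set B := ∑ j, β j / s j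
  have hB : 1 + B ≠ 0 := right_ne_zero_of_mul_eq_one ha
  have hvariance : x ^ (-(1 : ℝ) / 2) * x ^ (a * B) = x ^ (-a) := by
    rw [← rpow_add hx]
    congr 1
    linear_combination (1 / 2 : ℝ) * ha
  have hsquare : (x ^ (-a)) ^ 2 = x ^ (-(1 / (1 + B))) := by
    rw [← rpow_natCast, ← rpow_mul hx.le]
    congr 1
    field_simp
    linear_combination -ha
  rw [sum_bandwidth_rpow hx.le a hs, prod_bandwidth_rpow_neg hx a hs, mul_assoc, hvariance,
    ← hsquare]
  ring

end Deconvolution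

open Deconvolution in
theorem stmt_17_general (d : ℕ)
    (s β : Fin d → ℝ) (hs : ∀ j, 0 < s j) (hβ : ∀ j, 0 < β j)
    (c₁ c₂ : ℝ) (hc₁ : 0 < c₁) (hc₂ : 0 < c₂) :
    ∃ C : ℝ, 0 < C ∧ ∀ n : ℕ, 1 ≤ n →
      ∃ h : Fin d → ℝ, (∀ j, 0 < h j ∧ h j ≤ 1) ∧
        (c₁ * ∑ j, h j ^ (s j) + c₂ * (n : ℝ) ^ (-(1:ℝ)/2) * ∏ j, h j ^ (-(β j))) ^ 2 ≤
          C * (n : ℝ) ^ (-(1 / (1 + ∑ j, β j / s j))) := by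
  have hB : 0 < 1 + ∑ j, β j / s j := by
    have := sum_nonneg fun j (_ : j ∈ univ) => div_nonneg (hβ j).le (hs j).le
    linarith
  refine ⟨(c₁ * d + c₂) ^ 2, by positivity, fun n hn => ?_⟩
  have hn1 : (1 : ℝ) ≤ n := by exact_mod_cast hn
  have hn0 : (0 : ℝ) < n := one_pos.trans_le hn1
  have ha : 2 * (1 / (2 * (1 + ∑ j, β j / s j))) * (1 + ∑ j, β j / s j) = 1 := by
    field_simp
  refine ⟨bandwidth n (1 / (2 * (1 + ∑ j, β j / s j))) s,
    fun j => ⟨bandwidth_pos hn0 _ s j, bandwidth_le_one hn1 (hs j) (by positivity)⟩, ?_⟩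
  have hrate := bias_add_variance_sq_at_bandwidth hn0 (fun j => (hs j).ne') ha c₁ c₂
  rw [Fintype.card_fin] at hrate
  exact hrate.le

/-- Deconvolution bias–variance trade-off (proof of Theorem 2): for `s, β ∈ (0,∞)^d`
there is `C > 0` such that for all `n ≥ 1`,
`inf_{h ∈ (0,1]^d} (c₁ ∑_j h_j^{s_j} + c₂ n^{-1/2} ∏_j h_j^{-β_j})² ≤ C n^{-1/(1+∑_j β_j/s_j)}`,
the infimum bound being expressed by exhibiting a bandwidth `h` achieving it. -/
theorem stmt_17 (d : ℕ) (hd : 1 ≤ d)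
    (s β : Fin d → ℝ) (hs : ∀ j, 0 < s j) (hβ : ∀ j, 0 < β j)
    (c₁ c₂ : ℝ) (hc₁ : 0 < c₁) (hc₂ : 0 < c₂) :
    ∃ C : ℝ, 0 < C ∧ ∀ n : ℕ, 1 ≤ n →
      ∃ h : Fin d → ℝ, (∀ j, 0 < h j ∧ h j ≤ 1) ∧
        (c₁ * ∑ j, h j ^ (s j) + c₂ * (n : ℝ) ^ (-(1:ℝ)/2) * ∏ j, h j ^ (-(β j))) ^ 2 ≤
          C * (n : ℝ) ^ (-(1 / (1 + ∑ j, β j / s j))) :=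
  stmt_17_general d s β hs hβ c₁ c₂ hc₁ hc₂
end

section
/- (Distortion gradient) Let P be a probability measure on ℝ^d with E‖X‖₂² < ∞ and continuous density, and for a codebook c = (c₁,…,c_k) ∈ (ℝ^d)^k with distinct centers define the distortion R(c) = E min_{j≤k} ‖X − c_j‖₂². Then R is differentiable at c and ∂R/∂c_j = −2 ∫_{V_j(c)} (x − c_j) f(x) dx, where V_j(c) = {x : ‖x − c_j‖₂ < ‖x − c_u‖₂ for all u ≠ j} is the open Voronoi cell of c_j. -/
/-!
For `x` in the open Voronoi cell of `c j`, the minimum `⨅ i, ‖x - c i‖ ^ 2` agrees with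
`‖x - c j‖ ^ 2` for all codebooks near `c`, so it is differentiable in the codebook with
derivative `w ↦ -2 ⟪x - c j, w j⟫`. Since the centres are distinct, the cells cover the space
up to finitely many bisector hyperplanes, which are null. On the unit ball around `c` the
integrand is Lipschitz in the codebook with constant `(2 ‖x‖ + 2 ‖c‖ + 1) f x`, which is
integrable by the moment assumption, so one may differentiate under the integral sign.
-/

open MeasureTheory RealInnerProductSpace Filter Topology Set Function

variable {α E ι : Type*}

section Voronoi

variable [PseudoMetricSpace α]

def voronoiCell (c : ι → α) (j : ι) : Set α :=
  {x | ∀ u, u ≠ j → dist x (c j) < dist x (c u)}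

theorem isOpen_voronoiCell [Finite ι] (c : ι → α) (j : ι) : IsOpen (voronoiCell c j) := by
  simp only [voronoiCell, ofPred_forall]
  exact isOpen_iInter_of_finite fun u => isOpen_iInter_of_finite fun _ =>
    isOpen_lt (continuous_id.dist continuous_const) (continuous_id.dist continuous_const)

theorem pairwise_disjoint_voronoiCell (c : ι → α) : Pairwise (Disjoint on voronoiCell c) :=
  fun i j hij => disjoint_left.2 fun _ hi hj => lt_asymm (hi j hij.symm) (hj i hij)

end Voronoi

section Bisector

variable [NormedAddCommGroup E] [InnerProductSpace ℝ E] [FiniteDimensional ℝ E]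
  [MeasurableSpace E] [BorelSpace E] (μ : Measure E) [μ.IsAddHaarMeasure]

theorem measure_setOf_dist_eq_dist {a b : E} (hab : a ≠ b) :
    μ {x | dist x a = dist x b} = 0 := by
  convert Measure.addHaar_affineSubspace μ _ (AffineSubspace.perpBisector_eq_top.not.2 hab)
  ext x
  exact AffineSubspace.mem_perpBisector_iff_dist_eq.symm

theorem ae_exists_mem_voronoiCell [Finite ι] [Nonempty ι] {c : ι → E} (hc : Injective c) :
    ∀ᵐ x ∂μ, ∃ j, x ∈ voronoiCell c j := by
  have h_ne : ∀ᵐ x ∂μ, ∀ i j, i ≠ j → dist x (c i) ≠ dist x (c j) := by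
    refine ae_all_iff.2 fun i => ae_all_iff.2 fun j => ?_
    by_cases hij : i = j
    · exact Eventually.of_forall fun _ h => (h hij).elim
    · refine (ae_iff.2 ?_).mono fun x hx _ => hx
      simpa using measure_setOf_dist_eq_dist μ (hc.ne hij)
  refine h_ne.mono fun x hx => ?_
  obtain ⟨j, hj⟩ := Finite.exists_min fun i => dist x (c i)
  exact ⟨j, fun u hu => (hj u).lt_of_ne (hx j u hu.symm)⟩

end Bisector

theorem abs_ciInf_sub_ciInf_le [Finite ι] [Nonempty ι] {g h : ι → ℝ} {C : ℝ}
    (hC : ∀ i, |g i - h i| ≤ C) : |(⨅ i, g i) - ⨅ i, h i| ≤ C := by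
  have key : ∀ g h : ι → ℝ, (∀ i, g i ≤ h i + C) → (⨅ i, g i) ≤ (⨅ i, h i) + C := by
    intro g h hgh
    obtain ⟨i, hi⟩ := exists_eq_ciInf_of_finite (f := h)
    rw [← hi]
    exact (ciInf_le (finite_range g).bddBelow i).trans (hgh i)
  rw [abs_sub_le_iff]
  constructor
  · linarith [key g h fun i => by linarith [(abs_sub_le_iff.1 (hC i)).1]]
  · linarith [key h g fun i => by linarith [(abs_sub_le_iff.1 (hC i)).2]]

section Distortion

variable [NormedAddCommGroup E] [Fintype ι]

theorem iInf_sq_norm_sub_eventuallyEq {c : ι → E} {j : ι} {x : E} (hx : x ∈ voronoiCell c j) :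
    (fun c' : ι → E => ⨅ i, ‖x - c' i‖ ^ 2) =ᶠ[𝓝 c] fun c' => ‖x - c' j‖ ^ 2 := by
  have h_near : ∀ᶠ c' in 𝓝 c, ∀ u, u ≠ j → ‖x - c' j‖ < ‖x - c' u‖ := by
    refine eventually_all.2 fun u => ?_
    by_cases hu : u = j
    · exact Eventually.of_forall fun _ h => (h hu).elim
    · have hlt : ‖x - c j‖ < ‖x - c u‖ := by simpa only [dist_eq_norm] using hx u hu
      refine ((Continuous.continuousAt ?_).eventually_lt (Continuous.continuousAt ?_) hlt).mono
        fun _ h _ => h <;> fun_prop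
  have : Nonempty ι := ⟨j⟩
  refine h_near.mono fun c' hc' => ?_
  refine le_antisymm (ciInf_le (finite_range _).bddBelow j) (le_ciInf fun u => ?_)
  rcases eq_or_ne u j with rfl | hu
  · exact le_rfl
  · exact pow_le_pow_left₀ (norm_nonneg _) (hc' u hu).le 2

theorem abs_iInf_sq_norm_sub_sub_le {c a : ι → E} (ha : ‖a - c‖ ≤ 1) (x : E) :
    |(⨅ i, ‖x - a i‖ ^ 2) - ⨅ i, ‖x - c i‖ ^ 2| ≤ (2 * ‖x‖ + 2 * ‖c‖ + 1) * ‖a - c‖ := by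
  cases isEmpty_or_nonempty ι
  · simpa using by positivity
  refine abs_ciInf_sub_ciInf_le fun i => ?_
  have hai : ‖a i - c i‖ ≤ ‖a - c‖ := norm_le_pi_norm (a - c) i
  have h_diff : |‖x - a i‖ - ‖x - c i‖| ≤ ‖a i - c i‖ := by
    simpa [norm_sub_rev (a i)] using abs_norm_sub_norm_le (x - a i) (x - c i)
  have h_sum : ‖x - a i‖ + ‖x - c i‖ ≤ 2 * ‖x‖ + 2 * ‖c‖ + 1 := by
    linarith [norm_le_pi_norm c i, norm_sub_le x (c i), norm_sub_rev (c i) (a i),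
      norm_sub_le_norm_sub_add_norm_sub x (c i) (a i)]
  calc |‖x - a i‖ ^ 2 - ‖x - c i‖ ^ 2|
      = |‖x - a i‖ - ‖x - c i‖| * (‖x - a i‖ + ‖x - c i‖) := by
        rw [sq_sub_sq, abs_mul, abs_of_nonneg (by positivity), mul_comm]
    _ ≤ ‖a - c‖ * (2 * ‖x‖ + 2 * ‖c‖ + 1) := by gcongr; exact h_diff.trans hai
    _ = _ := mul_comm _ _

variable [InnerProductSpace ℝ E]

theorem hasFDerivAt_iInf_sq_norm_sub {c : ι → E} {j : ι} {x : E} (hx : x ∈ voronoiCell c j) :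
    HasFDerivAt (fun c' : ι → E => ⨅ i, ‖x - c' i‖ ^ 2)
      ((-2 : ℝ) • (innerSL ℝ (x - c j)).comp (ContinuousLinearMap.proj j)) c := by
  refine (((hasFDerivAt_apply j c).const_sub x).norm_sq.congr_fderiv ?_).congr_of_eventuallyEq
    (iInf_sq_norm_sub_eventuallyEq hx)
  ext w
  simp only [ContinuousLinearMap.comp_neg, smul_apply, ContinuousLinearMap.comp_apply,
    ContinuousLinearMap.proj_apply, coe_innerSL_apply, nsmul_eq_mul, smul_eq_mul, neg_apply]
  ring

end Distortion

section Integral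

variable [NormedAddCommGroup E] [MeasurableSpace E] [OpensMeasurableSpace E]
  {μ : Measure E} {f : E → ℝ}

theorem integrable_norm_mul_of_integrable_sq_norm_mul (hf : Measurable f) (hf0 : 0 ≤ f)
    (hfint : Integrable f μ) (hmom : Integrable (fun x => ‖x‖ ^ 2 * f x) μ) :
    Integrable (fun x => ‖x‖ * f x) μ := by
  refine (hfint.add hmom).mono' (by fun_prop) (Eventually.of_forall fun x => ?_)
  rw [Real.norm_of_nonneg (mul_nonneg (norm_nonneg x) (hf0 x)), Pi.add_apply]
  nlinarith [mul_nonneg (sq_nonneg (‖x‖ - 1)) (hf0 x), mul_nonneg (norm_nonneg x) (hf0 x)]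

theorem integrable_iInf_sq_norm_sub_mul [Finite ι] (hf : Measurable f) (hf0 : 0 ≤ f)
    (hfint : Integrable f μ) (hmom : Integrable (fun x => ‖x‖ ^ 2 * f x) μ) (c : ι → E) :
    Integrable (fun x => (⨅ i, ‖x - c i‖ ^ 2) * f x) μ := by
  cases isEmpty_or_nonempty ι
  · simp
  obtain ⟨i⟩ := ‹Nonempty ι›
  refine ((hmom.const_mul 2).add (hfint.const_mul (2 * ‖c i‖ ^ 2))).mono'
    ((Measurable.iInf fun i => (by fun_prop : Continuous _).measurable).mul hf).aestronglyMeasurable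
    (Eventually.of_forall fun x => ?_)
  have h_inf : (⨅ i, ‖x - c i‖ ^ 2) ≤ ‖x - c i‖ ^ 2 := ciInf_le (finite_range _).bddBelow i
  have h_sq : ‖x - c i‖ ^ 2 ≤ 2 * ‖x‖ ^ 2 + 2 * ‖c i‖ ^ 2 := by
    nlinarith [norm_sub_le x (c i), norm_nonneg (x - c i), sq_nonneg (‖x‖ - ‖c i‖)]
  rw [Real.norm_of_nonneg (mul_nonneg (le_ciInf fun _ => sq_nonneg _) (hf0 x)), Pi.add_apply]
  nlinarith [mul_le_mul_of_nonneg_right (h_inf.trans h_sq) (hf0 x)]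

end Integral

section Gradient

variable [NormedAddCommGroup E] [InnerProductSpace ℝ E] [Fintype ι]

/-- On the cell boundaries, a null set, this is `0` rather than a derivative. -/
noncomputable def distortionIntegrandFDeriv (f : E → ℝ) (c : ι → E) (x : E) : (ι → E) →L[ℝ] ℝ :=
  ∑ j, (voronoiCell c j).indicator
    (fun y => (-2 * f y) • (innerSL ℝ (y - c j)).comp (ContinuousLinearMap.proj j)) x

theorem distortionIntegrandFDeriv_of_mem {f : E → ℝ} {c : ι → E} {j : ι} {x : E}
    (hx : x ∈ voronoiCell c j) :
    distortionIntegrandFDeriv f c x =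
      (-2 * f x) • (innerSL ℝ (x - c j)).comp (ContinuousLinearMap.proj j) := by
  rw [distortionIntegrandFDeriv, Finset.sum_eq_single_of_mem j (Finset.mem_univ j)
    fun u _ hu => indicator_of_notMem
      (disjoint_left.1 (pairwise_disjoint_voronoiCell c hu.symm) hx) _]
  exact indicator_of_mem hx _

theorem distortionIntegrandFDeriv_apply_single [DecidableEq ι] (f : E → ℝ) (c : ι → E) (j : ι)
    (v x : E) :
    distortionIntegrandFDeriv f c x (Pi.single j v) =
      (voronoiCell c j).indicator (fun y => -2 * ⟪y - c j, v⟫ * f y) x := by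
  rw [distortionIntegrandFDeriv, sum_apply, Finset.sum_eq_single j]
  · by_cases hx : x ∈ voronoiCell c j
    · simp only [hx, indicator_of_mem, smul_apply, ContinuousLinearMap.comp_apply,
        ContinuousLinearMap.proj_apply, Pi.single_eq_same, coe_innerSL_apply, smul_eq_mul]
      ring
    · simp [hx]
  · intro u _ hu
    by_cases hx : x ∈ voronoiCell c u <;> simp [hx, hu]
  · simp

theorem hasFDerivAt_iInf_sq_norm_sub_mul {f : E → ℝ} {c : ι → E} {j : ι} {x : E}
    (hx : x ∈ voronoiCell c j) :
    HasFDerivAt (fun c' : ι → E => (⨅ i, ‖x - c' i‖ ^ 2) * f x)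
      (distortionIntegrandFDeriv f c x) c := by
  rw [distortionIntegrandFDeriv_of_mem hx, mul_comm, ← smul_smul]
  exact (hasFDerivAt_iInf_sq_norm_sub hx).mul_const (f x)

end Gradient

theorem HasFDerivAt.hasDerivAt_update_add_smul {𝕜 F G : Type*} [NontriviallyNormedField 𝕜]
    [Fintype ι] [DecidableEq ι] [NormedAddCommGroup F] [NormedSpace 𝕜 F] [NormedAddCommGroup G]
    [NormedSpace 𝕜 G] {g : (ι → F) → G} {L : (ι → F) →L[𝕜] G} {c : ι → F}
    (hg : HasFDerivAt g L c) (j : ι) (v : F) :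
    HasDerivAt (fun t : 𝕜 => g (update c j (c j + t • v))) (L (Pi.single j v)) 0 := by
  have h_line : HasDerivAt (fun t : 𝕜 => c j + t • v) v 0 := by
    simpa using ((hasDerivAt_id (0 : 𝕜)).smul_const v).const_add (c j)
  have h_update : HasDerivAt (fun t : 𝕜 => update c j (c j + t • v)) (Pi.single j v) 0 := by
    refine ((hasFDerivAt_update (𝕜 := 𝕜) c (c j + (0 : 𝕜) • v)).comp_hasDerivAt 0
      h_line).congr_deriv (funext fun i => ?_)
    rcases eq_or_ne i j with rfl | hi <;> simp [*]
  exact hg.comp_hasDerivAt_of_eq 0 h_update (by simp)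

section Differentiation

/- Stated on `EuclideanSpace`: for a general inner product space `E`, instance search fails to
find the `ContinuousENorm` on `(ι → E) →L[ℝ] ℝ` that `Integrable` needs, as the two routes to
`NormedSpace ℝ E` disagree on the `NormedField ℝ` instance. -/

variable {d : ℕ} [Fintype ι] [Nonempty ι] (μ : Measure (EuclideanSpace ℝ (Fin d)))
  [μ.IsAddHaarMeasure] {f : EuclideanSpace ℝ (Fin d) → ℝ}

theorem hasFDerivAt_integral_iInf_sq_norm_sub_mul (hf : Measurable f) (hf0 : 0 ≤ f)
    (hfint : Integrable f μ) (hmom : Integrable (fun x => ‖x‖ ^ 2 * f x) μ)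
    {c : ι → EuclideanSpace ℝ (Fin d)} (hc : Injective c) :
    Integrable (distortionIntegrandFDeriv f c) μ ∧
      HasFDerivAt (fun c' : ι → EuclideanSpace ℝ (Fin d) => ∫ x, (⨅ i, ‖x - c' i‖ ^ 2) * f x ∂μ)
        (∫ x, distortionIntegrandFDeriv f c x ∂μ) c := by
  have h_meas : AEStronglyMeasurable (distortionIntegrandFDeriv f c) μ := by
    refine Finset.aestronglyMeasurable_fun_sum _ fun j _ => ?_
    refine AEStronglyMeasurable.indicator ?_ (isOpen_voronoiCell c j).measurableSet
    exact (hf.aestronglyMeasurable.const_mul (-2)).smul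
      (Continuous.aestronglyMeasurable (by fun_prop))
  have h_bound : Integrable (fun x => (2 * ‖x‖ + 2 * ‖c‖ + 1) * f x) μ := by
    refine (((integrable_norm_mul_of_integrable_sq_norm_mul hf hf0 hfint hmom).const_mul 2).add
      (hfint.const_mul (2 * ‖c‖ + 1))).congr (Eventually.of_forall fun x => ?_)
    simp only [Pi.add_apply]
    ring
  have h_lip : ∀ᵐ x ∂μ, ∀ a ∈ Metric.ball c 1,
      ‖(⨅ i, ‖x - a i‖ ^ 2) * f x - (⨅ i, ‖x - c i‖ ^ 2) * f x‖ ≤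
        (2 * ‖x‖ + 2 * ‖c‖ + 1) * f x * ‖a - c‖ := by
    refine Eventually.of_forall fun x a ha => ?_
    rw [← sub_mul, norm_mul, Real.norm_eq_abs, Real.norm_of_nonneg (hf0 x), mul_right_comm]
    exact mul_le_mul_of_nonneg_right
      (abs_iInf_sq_norm_sub_sub_le (mem_ball_iff_norm.1 ha).le x) (hf0 x)
  exact hasFDerivAt_integral_of_dominated_loc_of_lip' (Metric.ball_mem_nhds c one_pos)
    (fun a _ => (integrable_iInf_sq_norm_sub_mul hf hf0 hfint hmom a).aestronglyMeasurable)
    (integrable_iInf_sq_norm_sub_mul hf hf0 hfint hmom c) h_meas h_lip h_bound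
    ((ae_exists_mem_voronoiCell μ hc).mono fun x ⟨_, hx⟩ => hasFDerivAt_iInf_sq_norm_sub_mul hx)

theorem hasDerivAt_integral_iInf_sq_norm_sub_mul_update [DecidableEq ι] (hf : Measurable f)
    (hf0 : 0 ≤ f) (hfint : Integrable f μ) (hmom : Integrable (fun x => ‖x‖ ^ 2 * f x) μ)
    {c : ι → EuclideanSpace ℝ (Fin d)} (hc : Injective c) (j : ι) (v : EuclideanSpace ℝ (Fin d)) :
    HasDerivAt (fun t : ℝ => ∫ x, (⨅ i, ‖x - update c j (c j + t • v) i‖ ^ 2) * f x ∂μ)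
      (∫ x in voronoiCell c j, -2 * ⟪x - c j, v⟫ * f x ∂μ) 0 := by
  obtain ⟨h_int, h_deriv⟩ := hasFDerivAt_integral_iInf_sq_norm_sub_mul μ hf hf0 hfint hmom hc
  refine (h_deriv.hasDerivAt_update_add_smul j v).congr_deriv ?_
  rw [ContinuousLinearMap.integral_apply h_int, ← integral_indicator
    (isOpen_voronoiCell c j).measurableSet]
  simp only [distortionIntegrandFDeriv_apply_single]

end Differentiation

theorem stmt_18_general (d k : ℕ) (hk : 1 ≤ k)
    (f : EuclideanSpace ℝ (Fin d) → ℝ) (hfc : Continuous f) (hf0 : ∀ x, 0 ≤ f x)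
    (hfint : Integrable f)
    (hmom : Integrable fun x : EuclideanSpace ℝ (Fin d) => ‖x‖ ^ 2 * f x)
    (R : (Fin k → EuclideanSpace ℝ (Fin d)) → ℝ)
    (hR : ∀ c : Fin k → EuclideanSpace ℝ (Fin d),
      R c = ∫ x, (⨅ j, ‖x - c j‖ ^ 2) * f x)
    (c : Fin k → EuclideanSpace ℝ (Fin d))
    (hdist : ∀ i j : Fin k, i ≠ j → c i ≠ c j) :
    DifferentiableAt ℝ R c ∧
      ∀ (j : Fin k) (v : EuclideanSpace ℝ (Fin d)),
        HasDerivAt (fun t : ℝ => R (Function.update c j (c j + t • v)))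
          (∫ x in {x : EuclideanSpace ℝ (Fin d) |
              ∀ u : Fin k, u ≠ j → dist x (c j) < dist x (c u)},
            (-2 * ⟪x - c j, v⟫) * f x) 0 := by
  have : Nonempty (Fin k) := ⟨⟨0, hk⟩⟩
  have hc : Injective c := fun i j hij => by_contra fun hne => hdist i j hne hij
  obtain rfl : R = fun c' => ∫ x, (⨅ j, ‖x - c' j‖ ^ 2) * f x := funext hR
  exact ⟨(hasFDerivAt_integral_iInf_sq_norm_sub_mul volume hfc.measurable hf0 hfint hmom hc).2
    |>.differentiableAt,
    hasDerivAt_integral_iInf_sq_norm_sub_mul_update volume hfc.measurable hf0 hfint hmom hc⟩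

/-- Gradient of the k-means distortion: if `X` has continuous density `f` with finite
second moment, and the centers of the codebook `c` are pairwise distinct, then the
distortion `R(c) = E min_j ‖X - c_j‖²` is differentiable at `c` with partial gradients
`∂R/∂c_j = -2 ∫_{V_j(c)} (x - c_j) f(x) dx`, expressed via directional derivatives over
the open Voronoi cells `V_j(c)`. -/
theorem stmt_18 (d k : ℕ) (hd : 1 ≤ d) (hk : 1 ≤ k)
    (f : EuclideanSpace ℝ (Fin d) → ℝ) (hfc : Continuous f) (hf0 : ∀ x, 0 ≤ f x)
    (hfint : Integrable f) (hf1 : ∫ x, f x = 1)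
    (hmom : Integrable fun x : EuclideanSpace ℝ (Fin d) => ‖x‖ ^ 2 * f x)
    (R : (Fin k → EuclideanSpace ℝ (Fin d)) → ℝ)
    (hR : ∀ c : Fin k → EuclideanSpace ℝ (Fin d),
      R c = ∫ x, (⨅ j, ‖x - c j‖ ^ 2) * f x)
    (c : Fin k → EuclideanSpace ℝ (Fin d))
    (hdist : ∀ i j : Fin k, i ≠ j → c i ≠ c j) :
    DifferentiableAt ℝ R c ∧
      ∀ (j : Fin k) (v : EuclideanSpace ℝ (Fin d)),
        HasDerivAt (fun t : ℝ => R (Function.update c j (c j + t • v)))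
          (∫ x in {x : EuclideanSpace ℝ (Fin d) |
              ∀ u : Fin k, u ≠ j → dist x (c j) < dist x (c u)},
            (-2 * ⟪x - c j, v⟫) * f x) 0 :=
  stmt_18_general d k hk f hfc hf0 hfint hmom R hR c hdist
end
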